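/- arXiv:2212.07311 — 5 statements merged into one kernel-verified Lean document; each statement's English description precedes it below -/
import Mathlib

section
/- Let d, M ≥ 1 be integers, μ, θ₀ ∈ ℝ^d, and let Λ and C₀ be symmetric positive definite d×d real matrices. Then ∫_{ℝ^d} f(θ; μ, Λ⁻¹) · f(θ; θ₀, C₀)^M dθ = (2π)^{-dM/2} · (det C₀)^{-(M-1)/2} · det(C₀ + M·Λ⁻¹)^{-1/2} · exp( -(1/2)(θ₀ - μ)ᵀ ((1/M)·C₀ + Λ⁻¹)⁻¹ (θ₀ - μ) ), where the integral is with respect to Lebesgue measure on ℝ^d. -/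
open MeasureTheory Matrix

/-- Gaussian density with mean `m` and covariance `S` on `ℝ^d`. -/
noncomputable def gaussDensity {d : ℕ} (m : Fin d → ℝ) (S : Matrix (Fin d) (Fin d) ℝ)
    (x : Fin d → ℝ) : ℝ :=
  (2 * Real.pi) ^ (-(d : ℝ) / 2) * S.det ^ (-(1 : ℝ) / 2) *
    Real.exp (-(1 / 2) * ((x - m) ⬝ᵥ (S⁻¹ *ᵥ (x - m))))
lemma std_gauss (d : ℕ) :
    ∫ x : Fin d → ℝ, Real.exp (-(1/2) * (x ⬝ᵥ x)) = (2*Real.pi) ^ ((d:ℝ)/2) := by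
  have h1 : ∀ x : Fin d → ℝ, Real.exp (-(1/2) * (x ⬝ᵥ x))
      = ∏ i, Real.exp (-(1/2) * (x i)^2) := by
    intro x
    rw [← Real.exp_sum]
    congr 1
    simp only [dotProduct, Finset.mul_sum]
    congr 1; ext i; ring
  simp_rw [h1]
  rw [MeasureTheory.volume_pi, integral_fintype_prod_eq_pow (ι := Fin d) (fun t : ℝ => Real.exp (-(1/2) * t^2))]
  rw [integral_gaussian (1/2)]
  rw [show (Real.pi / (1/2)) = 2 * Real.pi by ring]
  rw [Real.sqrt_eq_rpow, Fintype.card_fin, ← Real.rpow_natCast ((2*Real.pi) ^ ((1:ℝ)/2)) d,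
    ← Real.rpow_mul (by positivity)]
  ring_nf

open scoped MatrixOrder in
lemma quad_gauss {d : ℕ} {P : Matrix (Fin d) (Fin d) ℝ} (hP : P.PosDef) :
    ∫ x : Fin d → ℝ, Real.exp (-(1/2) * (x ⬝ᵥ (P *ᵥ x)))
      = (2*Real.pi) ^ ((d:ℝ)/2) * P.det ^ (-(1:ℝ)/2) := by
  classical
  set R := CFC.sqrt P with hRdef
  have hRsym : Rᵀ = R := by
    have h := (Matrix.nonneg_iff_posSemidef.mp (CFC.sqrt_nonneg P)).isHermitian.eq
    rwa [Matrix.conjTranspose_eq_transpose_of_trivial] at h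
  have hRR : R * R = P := CFC.sqrt_mul_sqrt_self P (Matrix.nonneg_iff_posSemidef.mpr hP.posSemidef)
  have hdet2 : R.det * R.det = P.det := by rw [← Matrix.det_mul, hRR]
  have hdetP : 0 < P.det := hP.det_pos
  have hdetR : R.det ≠ 0 := by
    intro h; rw [h, mul_zero] at hdet2; linarith
  have habs : |R.det| = Real.sqrt P.det := by
    rw [← hdet2, ← sq, Real.sqrt_sq_eq_abs]
  have hquad : ∀ x : Fin d → ℝ, (R *ᵥ x) ⬝ᵥ (R *ᵥ x) = x ⬝ᵥ (P *ᵥ x) := by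
    intro x
    rw [Matrix.dotProduct_mulVec, ← Matrix.mulVec_transpose, hRsym, Matrix.mulVec_mulVec,
      hRR, dotProduct_comm]
  have hmap := Real.map_matrix_volume_pi_eq_smul_volume_pi hdetR
  have hcont : Continuous (Matrix.toLin' R) := LinearMap.continuous_of_finiteDimensional _
  have hint : ∫ x : Fin d → ℝ, Real.exp (-(1/2) * (x ⬝ᵥ (P *ᵥ x)))
      = ∫ y, Real.exp (-(1/2) * (y ⬝ᵥ y)) ∂(Measure.map (Matrix.toLin' R) volume) := by
    rw [integral_map hcont.measurable.aemeasurable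
      (Continuous.aestronglyMeasurable (by continuity))]
    congr with x
    rw [Matrix.toLin'_apply, hquad]
  rw [hint, hmap, integral_smul_measure, std_gauss d]
  rw [ENNReal.toReal_ofReal (abs_nonneg _), abs_inv, habs, smul_eq_mul]
  rw [Real.sqrt_eq_rpow, ← Real.rpow_neg_one (P.det ^ ((1:ℝ)/2)), ← Real.rpow_mul hdetP.le]
  ring_nf

lemma dp_move {d : ℕ} (N : Matrix (Fin d) (Fin d) ℝ) (a b : Fin d → ℝ) :
    (N *ᵥ a) ⬝ᵥ b = a ⬝ᵥ (Nᵀ *ᵥ b) := by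
  rw [dotProduct_comm, Matrix.dotProduct_mulVec, ← Matrix.mulVec_transpose,
    dotProduct_comm]

lemma sym_dp {d : ℕ} {A : Matrix (Fin d) (Fin d) ℝ} (hA : Aᵀ = A) (a b : Fin d → ℝ) :
    (A *ᵥ a) ⬝ᵥ b = a ⬝ᵥ (A *ᵥ b) := by rw [dp_move, hA]

lemma quad_form_eq {d : ℕ} (N A : Matrix (Fin d) (Fin d) ℝ) (p : Fin d → ℝ) :
    (N *ᵥ p) ⬝ᵥ (A *ᵥ (N *ᵥ p)) = p ⬝ᵥ ((Nᵀ * A * N) *ᵥ p) := by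
  rw [dp_move, Matrix.mulVec_mulVec, Matrix.mulVec_mulVec]

lemma mulinv_comm {d : ℕ} (A B : Matrix (Fin d) (Fin d) ℝ) (hS : IsUnit (A + B).det) :
    A * (A + B)⁻¹ * B = B * (A + B)⁻¹ * A := by
  set S := A + B with hSdef
  have hSinv : S * S⁻¹ = 1 := Matrix.mul_nonsing_inv S hS
  have hSinv' : S⁻¹ * S = 1 := Matrix.nonsing_inv_mul S hS
  have h1 : A * S⁻¹ * B = B - B * S⁻¹ * B := by
    have hA' : A = S - B := by rw [hSdef]; abel
    rw [hA', sub_mul, sub_mul, hSinv, one_mul]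
  have h2 : B * S⁻¹ * A = B - B * S⁻¹ * B := by
    have hA' : A = S - B := by rw [hSdef]; abel
    rw [hA', mul_sub, mul_assoc B S⁻¹ S, hSinv', mul_one]
  rw [h1, h2]

lemma completion {d : ℕ} (A B : Matrix (Fin d) (Fin d) ℝ) (hA : Aᵀ = A) (hB : Bᵀ = B)
    (hS : IsUnit (A + B).det) (v w θ : Fin d → ℝ) :
    (θ - v) ⬝ᵥ (A *ᵥ (θ - v)) + (θ - w) ⬝ᵥ (B *ᵥ (θ - w))
      = (θ - (A + B)⁻¹ *ᵥ (A *ᵥ v + B *ᵥ w)) ⬝ᵥ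
          ((A + B) *ᵥ (θ - (A + B)⁻¹ *ᵥ (A *ᵥ v + B *ᵥ w)))
        + (w - v) ⬝ᵥ ((A * (A + B)⁻¹ * B) *ᵥ (w - v)) := by
  set S := A + B with hSdef
  have hSsym : Sᵀ = S := by rw [hSdef, Matrix.transpose_add, hA, hB]
  have hSinv : S * S⁻¹ = 1 := Matrix.mul_nonsing_inv S hS
  have hSinv' : S⁻¹ * S = 1 := Matrix.nonsing_inv_mul S hS
  have hSiT : S⁻¹ᵀ = S⁻¹ := by rw [Matrix.transpose_nonsing_inv, hSsym]
  set m := S⁻¹ *ᵥ (A *ᵥ v + B *ᵥ w) with hm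
  have hSm : S *ᵥ m = A *ᵥ v + B *ᵥ w := by
    rw [hm, Matrix.mulVec_mulVec, hSinv, Matrix.one_mulVec]
  set z := θ - m with hz
  set p := w - v with hp
  have hmv : m - v = (S⁻¹ * B) *ᵥ p := by
    have h1 : S *ᵥ (m - v) = B *ᵥ p := by
      rw [Matrix.mulVec_sub, hSm, hp, Matrix.mulVec_sub, hSdef, Matrix.add_mulVec]
      abel
    calc m - v = (S⁻¹ * S) *ᵥ (m - v) := by rw [hSinv', Matrix.one_mulVec]
    _ = S⁻¹ *ᵥ (S *ᵥ (m - v)) := by rw [← Matrix.mulVec_mulVec]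
    _ = S⁻¹ *ᵥ (B *ᵥ p) := by rw [h1]
    _ = (S⁻¹ * B) *ᵥ p := by rw [Matrix.mulVec_mulVec]
  have hmw : m - w = -((S⁻¹ * A) *ᵥ p) := by
    have h1 : S *ᵥ (m - w) = -(A *ᵥ p) := by
      rw [Matrix.mulVec_sub, hSm, hp, Matrix.mulVec_sub, hSdef, Matrix.add_mulVec]
      abel
    calc m - w = (S⁻¹ * S) *ᵥ (m - w) := by rw [hSinv', Matrix.one_mulVec]
    _ = S⁻¹ *ᵥ (S *ᵥ (m - w)) := by rw [← Matrix.mulVec_mulVec]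
    _ = S⁻¹ *ᵥ (-(A *ᵥ p)) := by rw [h1]
    _ = -((S⁻¹ * A) *ᵥ p) := by rw [Matrix.mulVec_neg, Matrix.mulVec_mulVec]
  have hθv : θ - v = z + (S⁻¹ * B) *ᵥ p := by rw [hz, ← hmv, sub_add_sub_cancel]
  have hθw : θ - w = z - (S⁻¹ * A) *ᵥ p := by
    rw [hz, sub_eq_add_neg (θ - m), ← hmw, sub_add_sub_cancel]
  have hKcomm : A * S⁻¹ * B = B * S⁻¹ * A := mulinv_comm A B hS
  have hq1 : ((S⁻¹ * B) *ᵥ p) ⬝ᵥ (A *ᵥ ((S⁻¹ * B) *ᵥ p))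
      + ((S⁻¹ * A) *ᵥ p) ⬝ᵥ (B *ᵥ ((S⁻¹ * A) *ᵥ p)) = p ⬝ᵥ ((A * S⁻¹ * B) *ᵥ p) := by
    have hmat : B * S⁻¹ * A * (S⁻¹ * B) + A * S⁻¹ * B * (S⁻¹ * A) = A * S⁻¹ * B := by
      rw [← hKcomm, ← mul_add, ← mul_add S⁻¹ B A, add_comm B A, ← hSdef, hSinv', mul_one]
    rw [quad_form_eq, quad_form_eq, Matrix.transpose_mul, hSiT, hB,
      Matrix.transpose_mul, hSiT, hA, ← dotProduct_add, ← Matrix.add_mulVec, hmat]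
  have hcross : z ⬝ᵥ (A *ᵥ ((S⁻¹ * B) *ᵥ p)) = z ⬝ᵥ (B *ᵥ ((S⁻¹ * A) *ᵥ p)) := by
    rw [Matrix.mulVec_mulVec, Matrix.mulVec_mulVec, ← mul_assoc, ← mul_assoc, hKcomm]
  have hsym1 : ((S⁻¹ * B) *ᵥ p) ⬝ᵥ (A *ᵥ z) = z ⬝ᵥ (A *ᵥ ((S⁻¹ * B) *ᵥ p)) := by
    rw [dotProduct_comm, sym_dp hA]
  have hsym2 : ((S⁻¹ * A) *ᵥ p) ⬝ᵥ (B *ᵥ z) = z ⬝ᵥ (B *ᵥ ((S⁻¹ * A) *ᵥ p)) := by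
    rw [dotProduct_comm, sym_dp hB]
  have hzz : z ⬝ᵥ (A *ᵥ z) + z ⬝ᵥ (B *ᵥ z) = z ⬝ᵥ (S *ᵥ z) := by
    rw [hSdef, Matrix.add_mulVec, dotProduct_add]
  rw [hθv, hθw]
  simp only [Matrix.mulVec_add, Matrix.mulVec_sub, dotProduct_add,
    add_dotProduct, dotProduct_sub, sub_dotProduct]
  linarith [hq1, hcross, hsym1, hsym2, hzz]

lemma quad_gauss_shift {d : ℕ} {P : Matrix (Fin d) (Fin d) ℝ} (hP : P.PosDef) (c : Fin d → ℝ) :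
    ∫ x : Fin d → ℝ, Real.exp (-(1/2) * ((x - c) ⬝ᵥ (P *ᵥ (x - c))))
      = (2*Real.pi) ^ ((d:ℝ)/2) * P.det ^ (-(1:ℝ)/2) := by
  rw [integral_sub_right_eq_self (fun y : Fin d → ℝ => Real.exp (-(1/2) * (y ⬝ᵥ (P *ᵥ y)))) c,
    quad_gauss hP]

lemma posDef_smul {d : ℕ} {A : Matrix (Fin d) (Fin d) ℝ} (hA : A.PosDef) {c : ℝ} (hc : 0 < c) :
    (c • A).PosDef := by
  refine ⟨?_, fun x hx => ?_⟩
  · rw [Matrix.IsHermitian, Matrix.conjTranspose_smul, star_trivial, hA.1.eq]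
  · have h := hA.2 hx
    have he : (x.sum fun i xi => x.sum fun j xj => star xi * (c • A) i j * xj)
        = c * (x.sum fun i xi => x.sum fun j xj => star xi * A i j * xj) := by
      simp only [Finsupp.sum, Finset.mul_sum, Matrix.smul_apply, smul_eq_mul]
      exact Finset.sum_congr rfl fun i _ => Finset.sum_congr rfl fun j _ => by ring
    rw [he]
    exact mul_pos hc h

theorem gauss_prior_power_integral {d M : ℕ} (hd : 1 ≤ d) (hM : 1 ≤ M)
    (μ θ₀ : Fin d → ℝ) (Λ C₀ : Matrix (Fin d) (Fin d) ℝ)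
    (hΛ : Λ.PosDef) (hC₀ : C₀.PosDef) :
    ∫ θ : Fin d → ℝ, gaussDensity μ Λ⁻¹ θ * gaussDensity θ₀ C₀ θ ^ M =
      (2 * Real.pi) ^ (-((d : ℝ) * (M : ℝ)) / 2) *
        C₀.det ^ (-((M : ℝ) - 1) / 2) *
        (C₀ + (M : ℝ) • Λ⁻¹).det ^ (-(1 : ℝ) / 2) *
        Real.exp (-(1 / 2) *
          ((θ₀ - μ) ⬝ᵥ (((1 / (M : ℝ)) • C₀ + Λ⁻¹)⁻¹ *ᵥ (θ₀ - μ)))) := by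
  have hMpos : (0:ℝ) < (M:ℝ) := by exact_mod_cast hM
  have hMne : (M:ℝ) ≠ 0 := hMpos.ne'
  set B := (M:ℝ) • C₀⁻¹ with hBdef
  set S := Λ + B with hSdef
  have hBpd : B.PosDef := posDef_smul hC₀.inv hMpos
  have hSpd : S.PosDef := hΛ.add hBpd
  have hDpd : (C₀ + (M:ℝ) • Λ⁻¹).PosDef := hC₀.add (posDef_smul hΛ.inv hMpos)
  have hLu : IsUnit Λ.det := hΛ.det_pos.ne'.isUnit
  have hCu : IsUnit C₀.det := hC₀.det_pos.ne'.isUnit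
  have hSu : IsUnit S.det := hSpd.det_pos.ne'.isUnit
  have hΛsym : Λᵀ = Λ := by
    rw [← Matrix.conjTranspose_eq_transpose_of_trivial, hΛ.1.eq]
  have hBsym : Bᵀ = B := by
    rw [← Matrix.conjTranspose_eq_transpose_of_trivial, hBpd.1.eq]
  have hΛΛ : Λ * Λ⁻¹ = 1 := Matrix.mul_nonsing_inv _ hLu
  have hΛΛ' : Λ⁻¹ * Λ = 1 := Matrix.nonsing_inv_mul _ hLu
  have hCC : C₀ * C₀⁻¹ = 1 := Matrix.mul_nonsing_inv _ hCu
  have hCC' : C₀⁻¹ * C₀ = 1 := Matrix.nonsing_inv_mul _ hCu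
  have hΛinvinv : Λ⁻¹⁻¹ = Λ := Matrix.nonsing_inv_nonsing_inv Λ hLu
  -- the two key matrix identities
  have hZinv : ((1/(M:ℝ)) • C₀)⁻¹ = (M:ℝ) • C₀⁻¹ := by
    apply Matrix.inv_eq_right_inv
    rw [Matrix.smul_mul, Matrix.mul_smul, smul_smul, hCC, one_div, inv_mul_cancel₀ hMne,
      one_smul]
  have hfact : (1/(M:ℝ)) • C₀ + Λ⁻¹ = Λ⁻¹ * S * ((1/(M:ℝ)) • C₀) := by
    have h : Λ⁻¹ * S * ((1/(M:ℝ)) • C₀) = (1/(M:ℝ)) • C₀ + Λ⁻¹ := by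
      rw [hSdef, hBdef]
      simp only [mul_add, add_mul, Matrix.mul_smul, Matrix.smul_mul, hΛΛ', one_mul, smul_smul]
      rw [mul_assoc, hCC', mul_one, one_div_mul_cancel hMne, one_smul]
    exact h.symm
  have hKeq : ((1/(M:ℝ)) • C₀ + Λ⁻¹)⁻¹ = Λ * S⁻¹ * B := by
    rw [hfact, Matrix.mul_inv_rev, Matrix.mul_inv_rev, hZinv, hΛinvinv, ← hBdef,
      ← mul_assoc]
    exact (mulinv_comm Λ B (hSdef ▸ hSu)).symm
  have hdetS : S.det = Λ.det * ((C₀ + (M:ℝ)•Λ⁻¹).det * C₀.det⁻¹) := by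
    have h : Λ * (C₀ + (M:ℝ)•Λ⁻¹) * C₀⁻¹ = S := by
      rw [mul_add, Matrix.mul_smul, hΛΛ, add_mul, Matrix.smul_mul, one_mul, mul_assoc,
        hCC, mul_one, hSdef, hBdef]
    rw [← h, Matrix.det_mul, Matrix.det_mul, Matrix.det_nonsing_inv, Ring.inverse_eq_inv',
      mul_assoc]
  set mstar := S⁻¹ *ᵥ (Λ *ᵥ μ + B *ᵥ θ₀) with hmstar
  set r := (θ₀ - μ) ⬝ᵥ ((Λ * S⁻¹ * B) *ᵥ (θ₀ - μ)) with hr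
  have hpoint : ∀ θ : Fin d → ℝ, gaussDensity μ Λ⁻¹ θ * gaussDensity θ₀ C₀ θ ^ M
      = ((2*Real.pi) ^ (-(d:ℝ)/2) * Λ⁻¹.det ^ (-(1:ℝ)/2) *
          ((2*Real.pi) ^ (-(d:ℝ)/2) * C₀.det ^ (-(1:ℝ)/2))^M * Real.exp (-(1/2)*r)) *
        Real.exp (-(1/2) * ((θ - mstar) ⬝ᵥ (S *ᵥ (θ - mstar)))) := by
    intro θ
    have hcomp := completion Λ B hΛsym hBsym (hSdef ▸ hSu) μ θ₀ θ
    rw [← hSdef, ← hmstar, ← hr] at hcomp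
    have hBq : (M:ℝ) * ((θ-θ₀) ⬝ᵥ (C₀⁻¹ *ᵥ (θ-θ₀))) = (θ-θ₀) ⬝ᵥ (B *ᵥ (θ-θ₀)) := by
      rw [hBdef, Matrix.smul_mulVec, dotProduct_smul, smul_eq_mul]
    unfold gaussDensity
    rw [hΛinvinv]
    rw [show ((2*Real.pi)^(-(d:ℝ)/2) * C₀.det^(-(1:ℝ)/2) *
        Real.exp (-(1/2) * ((θ-θ₀)⬝ᵥ(C₀⁻¹*ᵥ(θ-θ₀)))))^M
      = ((2*Real.pi)^(-(d:ℝ)/2) * C₀.det^(-(1:ℝ)/2))^M *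
        Real.exp (-(1/2) * ((θ-θ₀)⬝ᵥ(C₀⁻¹*ᵥ(θ-θ₀))))^M from by ring]
    rw [← Real.exp_nat_mul]
    have hexp : Real.exp (-(1/2) * ((θ-μ)⬝ᵥ(Λ*ᵥ(θ-μ)))) *
        Real.exp ((M:ℝ) * (-(1/2) * ((θ-θ₀)⬝ᵥ(C₀⁻¹*ᵥ(θ-θ₀)))))
        = Real.exp (-(1/2)*r) * Real.exp (-(1/2) * ((θ - mstar) ⬝ᵥ (S *ᵥ (θ - mstar)))) := by
      rw [← Real.exp_add, ← Real.exp_add]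
      congr 1
      linarith [hcomp, hBq]
    linear_combination ((2*Real.pi)^(-(d:ℝ)/2) * Λ⁻¹.det^(-(1:ℝ)/2) *
      ((2*Real.pi)^(-(d:ℝ)/2) * C₀.det^(-(1:ℝ)/2))^M) * hexp
  have hI : ∫ θ : Fin d → ℝ, gaussDensity μ Λ⁻¹ θ * gaussDensity θ₀ C₀ θ ^ M
      = ((2*Real.pi) ^ (-(d:ℝ)/2) * Λ⁻¹.det ^ (-(1:ℝ)/2) *
          ((2*Real.pi) ^ (-(d:ℝ)/2) * C₀.det ^ (-(1:ℝ)/2))^M * Real.exp (-(1/2)*r)) *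
        ((2*Real.pi) ^ ((d:ℝ)/2) * S.det ^ (-(1:ℝ)/2)) := by
    calc ∫ θ : Fin d → ℝ, gaussDensity μ Λ⁻¹ θ * gaussDensity θ₀ C₀ θ ^ M
        = ∫ θ : Fin d → ℝ, ((2*Real.pi) ^ (-(d:ℝ)/2) * Λ⁻¹.det ^ (-(1:ℝ)/2) *
          ((2*Real.pi) ^ (-(d:ℝ)/2) * C₀.det ^ (-(1:ℝ)/2))^M * Real.exp (-(1/2)*r)) *
          Real.exp (-(1/2) * ((θ - mstar) ⬝ᵥ (S *ᵥ (θ - mstar)))) := by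
          congr 1; funext θ; exact hpoint θ
      _ = _ := by rw [MeasureTheory.integral_const_mul, quad_gauss_shift hSpd mstar]
  rw [hI, hKeq, ← hr]
  have h2π : (0:ℝ) < 2*Real.pi := by positivity
  have hdΛ := hΛ.det_pos
  have hdC := hC₀.det_pos
  have hdD := hDpd.det_pos
  have hΛid : Λ⁻¹.det = Λ.det⁻¹ := by rw [Matrix.det_nonsing_inv, Ring.inverse_eq_inv']
  have hconst : (2*Real.pi)^(-(d:ℝ)/2) * Λ⁻¹.det^(-(1:ℝ)/2) *
      ((2*Real.pi)^(-(d:ℝ)/2) * C₀.det^(-(1:ℝ)/2))^M *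
      ((2*Real.pi)^((d:ℝ)/2) * S.det^(-(1:ℝ)/2))
      = (2*Real.pi)^(-((d:ℝ)*(M:ℝ))/2) * C₀.det^(-((M:ℝ)-1)/2) *
        (C₀+(M:ℝ)•Λ⁻¹).det^(-(1:ℝ)/2) := by
    rw [hΛid, hdetS]
    simp only [Real.rpow_def_of_pos h2π, Real.rpow_def_of_pos (inv_pos.mpr hdΛ),
      Real.rpow_def_of_pos hdC,
      Real.rpow_def_of_pos (show (0:ℝ) < Λ.det * ((C₀+(M:ℝ)•Λ⁻¹).det * C₀.det⁻¹) by positivity),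
      Real.rpow_def_of_pos hdD]
    simp only [mul_pow, ← Real.exp_nat_mul, ← Real.exp_add]
    rw [Real.exp_eq_exp]
    rw [Real.log_mul hdΛ.ne' (by positivity), Real.log_mul hdD.ne' (by positivity),
      Real.log_inv, Real.log_inv]
    ring
  linear_combination Real.exp (-(1/2)*r) * hconst
end

section
/- Let A be a symmetric positive definite d×d real matrix, B a symmetric positive semidefinite d×d real matrix, and v ∈ ℝ^d. Then the function t ↦ t · vᵀ (A + t·B)⁻¹ v is concave on (0, ∞). -/
open Matrix

section aux

variable {d : ℕ}

private lemma smulPSD {B : Matrix (Fin d) (Fin d) ℝ} (hB : B.PosSemidef)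
    {t : ℝ} (ht : 0 ≤ t) : (t • B).PosSemidef := by
  refine PosSemidef.of_dotProduct_mulVec_nonneg ?_ (fun x => ?_)
  · unfold Matrix.IsHermitian
    rw [conjTranspose_smul, hB.1.eq]; simp
  · rw [smul_mulVec, dotProduct_smul]
    have := hB.dotProduct_mulVec_nonneg x
    simp only [star_trivial] at this ⊢
    positivity

private lemma symm_dot {M : Matrix (Fin d) (Fin d) ℝ} (hM : Mᵀ = M) (x u : Fin d → ℝ) :
    (M *ᵥ x) ⬝ᵥ u = x ⬝ᵥ (M *ᵥ u) := by
  rw [dotProduct_comm, dotProduct_mulVec, ← mulVec_transpose, hM, dotProduct_comm,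
    dotProduct_mulVec, ← mulVec_transpose, hM]

private lemma tangent_bound {A B : Matrix (Fin d) (Fin d) ℝ}
    (hA : A.PosDef) (hB : B.PosSemidef) (v : Fin d → ℝ) {t z : ℝ}
    (ht : 0 < t) (hz : 0 < z) :
    t * (v ⬝ᵥ ((A + t • B)⁻¹ *ᵥ v)) ≤
      t * (v ⬝ᵥ ((A + z • B)⁻¹ *ᵥ v))
        - z * (t - z) * (((A + z • B)⁻¹ *ᵥ v) ⬝ᵥ (B *ᵥ ((A + z • B)⁻¹ *ᵥ v))) := by
  set Mt := A + t • B with hMtdef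
  set N := A + z • B with hNdef
  have hMt : Mt.PosDef := hA.add_posSemidef (smulPSD hB ht.le)
  have hN : N.PosDef := hA.add_posSemidef (smulPSD hB hz.le)
  have hMtT : Mtᵀ = Mt := by
    have := hMt.isHermitian.eq
    simpa [Matrix.conjTranspose_eq_transpose_of_trivial] using this
  have hBT : Bᵀ = B := by
    have := hB.1.eq
    simpa [Matrix.conjTranspose_eq_transpose_of_trivial] using this
  set x := Mt⁻¹ *ᵥ v with hxdef
  set u := N⁻¹ *ᵥ v with hudef
  have hxv : Mt *ᵥ x = v := by
    rw [hxdef, mulVec_mulVec, Matrix.mul_nonsing_inv _ (isUnit_iff_isUnit_det _ |>.1 hMt.isUnit),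
      one_mulVec]
  have huv : N *ᵥ u = v := by
    rw [hudef, mulVec_mulVec, Matrix.mul_nonsing_inv _ (isUnit_iff_isUnit_det _ |>.1 hN.isUnit),
      one_mulVec]
  have hMtu : Mt *ᵥ u = v + (t - z) • (B *ᵥ u) := by
    have hMN : Mt = N + (t - z) • B := by
      rw [hMtdef, hNdef]; module
    rw [hMN, add_mulVec, huv, smul_mulVec]
  set w := x - u with hwdef
  have hMw : Mt *ᵥ w = (z - t) • (B *ᵥ u) := by
    rw [hwdef, mulVec_sub, hxv, hMtu]; module
  -- scalar quantities
  have hs0 : 0 ≤ w ⬝ᵥ (Mt *ᵥ w) := by have := hMt.posSemidef.dotProduct_mulVec_nonneg w; simpa using this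
  have huBu0 : 0 ≤ u ⬝ᵥ (B *ᵥ u) := by have := hB.dotProduct_mulVec_nonneg u; simpa using this
  have hwBw0 : 0 ≤ w ⬝ᵥ (B *ᵥ w) := by have := hB.dotProduct_mulVec_nonneg w; simpa using this
  have hwAw0 : 0 ≤ w ⬝ᵥ (A *ᵥ w) := by have := hA.posSemidef.dotProduct_mulVec_nonneg w; simpa using this
  have hsym : u ⬝ᵥ (B *ᵥ w) = w ⬝ᵥ (B *ᵥ u) := by
    rw [dotProduct_mulVec, ← mulVec_transpose, hBT, dotProduct_comm]
  have e1 : w ⬝ᵥ (Mt *ᵥ w) = w ⬝ᵥ (A *ᵥ w) + t * (w ⬝ᵥ (B *ᵥ w)) := by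
    rw [hMtdef, add_mulVec, smul_mulVec, dotProduct_add, dotProduct_smul, smul_eq_mul]
  have e2 : w ⬝ᵥ (Mt *ᵥ w) = (z - t) * (w ⬝ᵥ (B *ᵥ u)) := by
    rw [hMw, dotProduct_smul, smul_eq_mul]
  -- Cauchy-Schwarz for B
  have hcs : (w ⬝ᵥ (B *ᵥ u)) ^ 2 ≤ (w ⬝ᵥ (B *ᵥ w)) * (u ⬝ᵥ (B *ᵥ u)) := by
    have hq : ∀ r : ℝ, 0 ≤ (w ⬝ᵥ (B *ᵥ w)) * (r * r) + (2 * (w ⬝ᵥ (B *ᵥ u))) * r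
        + u ⬝ᵥ (B *ᵥ u) := by
      intro r
      have h0 := hB.dotProduct_mulVec_nonneg (u + r • w)
      simp only [star_trivial, mulVec_add, mulVec_smul, dotProduct_add, add_dotProduct,
        dotProduct_smul, smul_dotProduct, smul_eq_mul] at h0
      rw [hsym] at h0
      nlinarith [h0]
    have hd := discrim_le_zero hq
    rw [discrim] at hd
    nlinarith [hd]
  -- key scalar inequality
  have hkey : t * (w ⬝ᵥ (Mt *ᵥ w)) ≤ (t - z) ^ 2 * (u ⬝ᵥ (B *ᵥ u)) := by
    set s := w ⬝ᵥ (Mt *ᵥ w) with hsdef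
    have hs2 : s ^ 2 ≤ (t - z) ^ 2 * ((w ⬝ᵥ (B *ᵥ w)) * (u ⬝ᵥ (B *ᵥ u))) := by
      rw [e2]
      nlinarith [hcs, sq_nonneg (t - z)]
    have htwBw : t * (w ⬝ᵥ (B *ᵥ w)) ≤ s := by rw [e1]; linarith
    have h2 : t * s ^ 2 ≤ ((t - z) ^ 2 * (u ⬝ᵥ (B *ᵥ u))) * s := by
      calc t * s ^ 2 ≤ t * ((t - z) ^ 2 * ((w ⬝ᵥ (B *ᵥ w)) * (u ⬝ᵥ (B *ᵥ u)))) :=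
            mul_le_mul_of_nonneg_left hs2 ht.le
        _ = ((t - z) ^ 2 * (u ⬝ᵥ (B *ᵥ u))) * (t * (w ⬝ᵥ (B *ᵥ w))) := by ring
        _ ≤ ((t - z) ^ 2 * (u ⬝ᵥ (B *ᵥ u))) * s := by
            apply mul_le_mul_of_nonneg_left htwBw
            positivity
    rcases hs0.eq_or_lt with h | h
    · rw [← h, mul_zero]; positivity
    · refine le_of_mul_le_mul_right ?_ h
      calc t * s * s = t * s ^ 2 := by ring
        _ ≤ ((t - z) ^ 2 * (u ⬝ᵥ (B *ᵥ u))) * s := h2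
  -- assemble
  have hvx : v ⬝ᵥ x = x ⬝ᵥ (Mt *ᵥ x) := by rw [← hxv, symm_dot hMtT]
  have hxuw : x = u + w := by rw [hwdef]; abel
  have hvu : v ⬝ᵥ u = v ⬝ᵥ x + (t - z) * ((u ⬝ᵥ (B *ᵥ u)) + (w ⬝ᵥ (B *ᵥ u))) := by
    have h1 : v ⬝ᵥ u = x ⬝ᵥ (Mt *ᵥ u) := by rw [← hxv, symm_dot hMtT]
    have h2 : x ⬝ᵥ (B *ᵥ u) = (u ⬝ᵥ (B *ᵥ u)) + (w ⬝ᵥ (B *ᵥ u)) := by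
      rw [hxuw, add_dotProduct]
    rw [h1, hMtu, dotProduct_add, dotProduct_smul, smul_eq_mul, h2, dotProduct_comm v x]
  have hsw : (t - z) * (w ⬝ᵥ (B *ᵥ u)) = -(w ⬝ᵥ (Mt *ᵥ w)) := by rw [e2]; ring
  have hfinal : t * (v ⬝ᵥ u) - z * (t - z) * (u ⬝ᵥ (B *ᵥ u)) - t * (v ⬝ᵥ x)
      = (t - z) ^ 2 * (u ⬝ᵥ (B *ᵥ u)) - t * (w ⬝ᵥ (Mt *ᵥ w)) := by
    rw [hvu]
    linear_combination t * hsw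
  linarith [hkey, hfinal]

end aux

theorem quadratic_form_concave {d : ℕ}
    (A B : Matrix (Fin d) (Fin d) ℝ) (hA : A.PosDef) (hB : B.PosSemidef)
    (v : Fin d → ℝ) :
    ConcaveOn ℝ (Set.Ioi 0) (fun t : ℝ => t * (v ⬝ᵥ ((A + t • B)⁻¹ *ᵥ v))) := by
  refine ⟨convex_Ioi 0, fun x hx y hy a b ha hb hab => ?_⟩
  simp only [Set.mem_Ioi] at hx hy
  simp only [smul_eq_mul]
  set z := a * x + b * y with hzdef
  have hzpos : 0 < z := by
    rcases ha.eq_or_lt with h | h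
    · have hb1 : b = 1 := by linarith
      rw [hzdef, ← h, hb1]; simpa using hy
    · have h1 : 0 < a * x := mul_pos h hx
      have h2 : 0 ≤ b * y := mul_nonneg hb hy.le
      rw [hzdef]; linarith
  set u := (A + z • B)⁻¹ *ᵥ v with hudef
  set α := v ⬝ᵥ u with hα
  set γ := u ⬝ᵥ (B *ᵥ u) with hγ
  have hx' := tangent_bound hA hB v hx hzpos (z := z)
  have hy' := tangent_bound hA hB v hy hzpos (z := z)
  rw [← hudef, ← hα, ← hγ] at hx' hy'
  have hfz : z * (v ⬝ᵥ ((A + z • B)⁻¹ *ᵥ v)) = z * α := by rw [← hudef, hα]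
  have hax : a * (x * (v ⬝ᵥ ((A + x • B)⁻¹ *ᵥ v))) ≤ a * (x * α - z * (x - z) * γ) :=
    mul_le_mul_of_nonneg_left hx' ha
  have hby : b * (y * (v ⬝ᵥ ((A + y • B)⁻¹ *ᵥ v))) ≤ b * (y * α - z * (y - z) * γ) :=
    mul_le_mul_of_nonneg_left hy' hb
  have hsum : a * (x * α - z * (x - z) * γ) + b * (y * α - z * (y - z) * γ) = z * α := by
    linear_combination (z * γ - α) * hzdef + z ^ 2 * γ * hab
  rw [hfz]
  clear_value z u α γ
  linarith [hax, hby, hsum]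
end

section
/- (Convexity of log S_M, proved in Appendix B of the paper.) Let d ≥ 1, θ₀, μ ∈ ℝ^d, and let C₀ and Λ be symmetric positive definite d×d real matrices. Define for t > 0: g(t) = −(t·d/2)·log(2π) − ((t−1)/2)·log det C₀ − (1/2)·log det(C₀ + t·Λ⁻¹) − (1/2)·(θ₀ − μ)ᵀ ((1/t)·C₀ + Λ⁻¹)⁻¹ (θ₀ − μ). Then g is convex on (0, ∞). -/
open Matrix

private lemma convexOn_congr' {s : Set ℝ} {f g : ℝ → ℝ} (h : ConvexOn ℝ s f)
    (he : ∀ x ∈ s, f x = g x) : ConvexOn ℝ s g := by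
  refine ⟨h.1, fun x hx y hy a b ha hb hab => ?_⟩
  rw [← he x hx, ← he y hy, ← he _ (h.1 hx hy ha hb hab)]
  exact h.2 hx hy ha hb hab

private lemma concaveOn_log_aux {c : ℝ} (hc : 0 ≤ c) :
    ConcaveOn ℝ (Set.Ioi 0) (fun t : ℝ => Real.log (1 + c * t)) := by
  refine ⟨convex_Ioi 0, fun x hx y hy a b ha hb hab => ?_⟩
  have hx0 : (0:ℝ) < x := hx
  have hy0 : (0:ℝ) < y := hy
  have hx' : (0:ℝ) < 1 + c * x := by nlinarith
  have hy' : (0:ℝ) < 1 + c * y := by nlinarith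
  have h := strictConcaveOn_log_Ioi.concaveOn.2 (Set.mem_Ioi.mpr hx')
    (Set.mem_Ioi.mpr hy') ha hb hab
  simp only [smul_eq_mul] at h ⊢
  calc a * Real.log (1 + c * x) + b * Real.log (1 + c * y)
      ≤ Real.log (a * (1 + c * x) + b * (1 + c * y)) := h
    _ = Real.log (1 + c * (a * x + b * y)) := by
        congr 1; linear_combination hab

private lemma concaveOn_frac_aux {c : ℝ} (hc : 0 ≤ c) :
    ConcaveOn ℝ (Set.Ioi 0) (fun t : ℝ => t / (1 + c * t)) := by
  refine ⟨convex_Ioi 0, fun x hx y hy a b ha hb hab => ?_⟩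
  have hx0 : (0:ℝ) < x := hx
  have hy0 : (0:ℝ) < y := hy
  simp only [smul_eq_mul]
  have hb' : b = 1 - a := by linarith
  subst hb'
  have ha1 : 0 ≤ 1 - a := hb
  have hpx : (0:ℝ) < 1 + c * x := by nlinarith
  have hpy : (0:ℝ) < 1 + c * y := by nlinarith
  have hpz : (0:ℝ) < 1 + c * (a * x + (1 - a) * y) := by
    nlinarith [mul_nonneg hc (mul_nonneg ha hx0.le), mul_nonneg hc (mul_nonneg ha1 hy0.le),
      mul_nonneg ha hx0.le, mul_nonneg ha1 hy0.le]
  have key2 : a * (x / (1 + c * x)) + (1 - a) * (y / (1 + c * y))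
      = (a * x * (1 + c * y) + (1 - a) * y * (1 + c * x)) / ((1 + c * x) * (1 + c * y)) := by
    field_simp
  rw [key2, div_le_div_iff₀ (by positivity) hpz]
  nlinarith [mul_nonneg (mul_nonneg (mul_nonneg ha ha1) hc) (sq_nonneg (x - y)),
    mul_pos hpx hpy]

private lemma concaveOn_sum_aux {ι : Type*} (s : Finset ι) (f : ι → ℝ → ℝ)
    (h : ∀ i ∈ s, ConcaveOn ℝ (Set.Ioi 0) (f i)) :
    ConcaveOn ℝ (Set.Ioi (0:ℝ)) (fun t => ∑ i ∈ s, f i t) := by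
  classical
  induction s using Finset.induction_on with
  | empty => simpa using concaveOn_const (0:ℝ) (convex_Ioi (0:ℝ))
  | @insert a s hni ih =>
      have h1 := h a (Finset.mem_insert_self a s)
      have h2 := ih fun i hi => h i (Finset.mem_insert_of_mem hi)
      have := h1.add h2
      refine ⟨this.1, fun x hx y hy p q hp hq hpq => ?_⟩
      simp only [Finset.sum_insert hni]
      exact this.2 hx hy hp hq hpq

private lemma convexOn_affine_aux (c : ℝ) :
    ConvexOn ℝ (Set.Ioi (0:ℝ)) (fun t => c * t) := by
  refine ⟨convex_Ioi 0, fun x _ y _ a b _ _ _ => le_of_eq ?_⟩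
  simp only [smul_eq_mul]; ring

private lemma key_diag {n : ℕ} (C₀ B : Matrix (Fin n) (Fin n) ℝ)
    (hC₀ : C₀.PosDef) (hB : B.PosDef) (v : Fin n → ℝ) :
    ∃ e w : Fin n → ℝ, (∀ i, 0 ≤ e i) ∧
      (∀ t : ℝ, 0 < t → (C₀ + t • B).det = C₀.det * ∏ i, (1 + e i * t)) ∧
      (∀ t : ℝ, 0 < t → v ⬝ᵥ (((1 / t) • C₀ + B)⁻¹ *ᵥ v)
        = ∑ i, (w i) ^ 2 * (t / (1 + e i * t))) := by
  classical
  set R := (open scoped MatrixOrder in CFC.sqrt C₀) with hRdef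
  have hRR : R * R = C₀ := by
    open scoped MatrixOrder in exact CFC.sqrt_mul_sqrt_self C₀ hC₀.posSemidef.nonneg
  have hRH : R.IsHermitian := by
    open scoped MatrixOrder in exact (CFC.sqrt_nonneg C₀).posSemidef.isHermitian
  have hdetC : 0 < C₀.det := hC₀.det_pos
  have hCdetRR : C₀.det = R.det * R.det := by rw [← hRR, det_mul]
  have hdetR : R.det ≠ 0 := by
    intro h; rw [hCdetRR, h, mul_zero] at hdetC; exact lt_irrefl _ hdetC
  have hR1 : R * R⁻¹ = 1 := mul_nonsing_inv _ (isUnit_iff_ne_zero.mpr hdetR)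
  have hR2 : R⁻¹ * R = 1 := nonsing_inv_mul _ (isUnit_iff_ne_zero.mpr hdetR)
  have hRinvH : R⁻¹.IsHermitian := hRH.inv
  set M := R⁻¹ * B * R⁻¹ with hMdef
  have hMps : M.PosSemidef := by
    have h := hB.posSemidef.mul_mul_conjTranspose_same R⁻¹
    rwa [hRinvH.eq] at h
  have hMH : M.IsHermitian := hMps.isHermitian
  set U : Matrix (Fin n) (Fin n) ℝ := (hMH.eigenvectorUnitary : Matrix (Fin n) (Fin n) ℝ)
    with hUdef
  set e := hMH.eigenvalues with hedef
  have he : ∀ i, 0 ≤ e i := fun i => hMps.eigenvalues_nonneg i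
  have hU1 : U * star U = 1 := mem_unitaryGroup_iff.mp hMH.eigenvectorUnitary.2
  have hU2 : star U * U = 1 := mem_unitaryGroup_iff'.mp hMH.eigenvectorUnitary.2
  have spec : M = U * diagonal e * star U := by
    have h := hMH.spectral_theorem
    rwa [RCLike.ofReal_real_eq_id, Function.id_comp] at h
  -- the key factorization
  have key : ∀ t : ℝ, 0 < t →
      C₀ + t • B = R * (U * diagonal (fun i => 1 + e i * t) * star U) * R := by
    intro t ht
    have hDt : diagonal (fun i => 1 + e i * t) = (1 : Matrix (Fin n) (Fin n) ℝ)
        + t • diagonal e := by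
      funext i j
      rcases eq_or_ne i j with rfl | h
      · simp [Matrix.diagonal_apply_eq, Matrix.one_apply_eq, Matrix.smul_apply, mul_comm]
      · simp [Matrix.diagonal_apply_ne _ h, Matrix.one_apply_ne h, Matrix.smul_apply]
    have h1 : U * diagonal (fun i => 1 + e i * t) * star U = 1 + t • M := by
      rw [hDt, mul_add, mul_one, add_mul, hU1, Matrix.mul_smul, Matrix.smul_mul, ← spec]
    have h3 : R * M * R = B := by
      rw [hMdef]
      simp only [← Matrix.mul_assoc]
      rw [hR1, one_mul, Matrix.mul_assoc B R⁻¹ R, hR2, mul_one]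
    have h2 : R * (1 + t • M) * R = C₀ + t • B := by
      rw [mul_add, mul_one, add_mul, hRR, Matrix.mul_smul, Matrix.smul_mul, h3]
    rw [h1, h2]
  refine ⟨e, (star U * R⁻¹) *ᵥ v, he, ?_, ?_⟩
  · intro t ht
    have hdU : U.det * (star U).det = 1 := by rw [← det_mul, hU1, det_one]
    rw [key t ht, det_mul, det_mul, det_mul, det_mul, det_diagonal]
    linear_combination (R.det * R.det * ∏ i, (1 + e i * t)) * hdU
      + (∏ i, (1 + e i * t)) * hCdetRR.symm
  · intro t ht
    have hpos : ∀ i, 0 < 1 + e i * t := fun i => by nlinarith [he i]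
    set N : Matrix (Fin n) (Fin n) ℝ :=
      R⁻¹ * (U * diagonal (fun i => (1 + e i * t)⁻¹) * star U) * R⁻¹ with hNdef
    have hDD : diagonal (fun i => 1 + e i * t) * diagonal (fun i => (1 + e i * t)⁻¹)
        = (1 : Matrix (Fin n) (Fin n) ℝ) := by
      have hfun : (fun i => (1 + e i * t) * (1 + e i * t)⁻¹) = fun _ => (1:ℝ) :=
        funext fun i => mul_inv_cancel₀ (hpos i).ne'
      rw [diagonal_mul_diagonal, hfun, diagonal_one]
    have hprod : (C₀ + t • B) * N = 1 := by
      rw [key t ht, hNdef]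
      simp only [← Matrix.mul_assoc]
      rw [Matrix.mul_assoc _ R R⁻¹, hR1, mul_one,
        Matrix.mul_assoc _ (star U) U, hU2, mul_one,
        Matrix.mul_assoc _ (diagonal fun i => 1 + e i * t) (diagonal fun i => (1 + e i * t)⁻¹),
        hDD, mul_one, Matrix.mul_assoc R U (star U), hU1, mul_one, hR1]
    have hA : (1 / t) • (C₀ + t • B) = (1 / t) • C₀ + B := by
      rw [smul_add, smul_smul, one_div, inv_mul_cancel₀ ht.ne', one_smul]
    have hinv2 : ((1 / t) • C₀ + B)⁻¹ = t • N := by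
      rw [← hA]
      apply inv_eq_right_inv
      rw [Matrix.smul_mul, Matrix.mul_smul, smul_smul, hprod, one_div,
        inv_mul_cancel₀ ht.ne', one_smul]
    rw [hinv2]
    have hRT : R⁻¹ᵀ = R⁻¹ := by
      rw [← conjTranspose_eq_transpose_of_trivial, hRinvH.eq]
    have hUT : (star U)ᵀ = U := by
      rw [star_eq_conjTranspose, conjTranspose_eq_transpose_of_trivial, transpose_transpose]
    set w := (star U * R⁻¹) *ᵥ v with hwdef
    have hNv : N *ᵥ v = R⁻¹ *ᵥ (U *ᵥ (diagonal (fun i => (1 + e i * t)⁻¹)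
        *ᵥ (star U *ᵥ (R⁻¹ *ᵥ v)))) := by
      rw [hNdef]
      simp only [← Matrix.mul_assoc, ← mulVec_mulVec]
    have hquad : v ⬝ᵥ (N *ᵥ v)
        = w ⬝ᵥ (diagonal (fun i => (1 + e i * t)⁻¹) *ᵥ w) := by
      rw [hNv, dotProduct_mulVec v R⁻¹, ← hRT, vecMul_transpose, hRT,
        dotProduct_mulVec _ U, ← hUT, vecMul_transpose, hUT, hwdef, ← mulVec_mulVec]
    rw [smul_mulVec, dotProduct_smul, hquad, smul_eq_mul]
    rw [dotProduct, Finset.mul_sum]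
    refine Finset.sum_congr rfl fun i _ => ?_
    rw [mulVec_diagonal]
    field_simp

theorem logSM_convex {d : ℕ} (hd : 1 ≤ d)
    (θ₀ μ : Fin d → ℝ) (C₀ Λ : Matrix (Fin d) (Fin d) ℝ)
    (hC₀ : C₀.PosDef) (hΛ : Λ.PosDef) :
    ConvexOn ℝ (Set.Ioi 0) (fun t : ℝ =>
      -(t * (d : ℝ) / 2) * Real.log (2 * Real.pi) -
        ((t - 1) / 2) * Real.log C₀.det -
        (1 / 2) * Real.log (C₀ + t • Λ⁻¹).det -
        (1 / 2) * ((θ₀ - μ) ⬝ᵥ (((1 / t) • C₀ + Λ⁻¹)⁻¹ *ᵥ (θ₀ - μ)))) := by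
  have hB : (Λ⁻¹).PosDef := hΛ.inv
  obtain ⟨e, w, he, hdet, hquad⟩ := key_diag C₀ Λ⁻¹ hC₀ hB (θ₀ - μ)
  have hS1 : ConcaveOn ℝ (Set.Ioi (0:ℝ)) (fun t => ∑ i, Real.log (1 + e i * t)) :=
    concaveOn_sum_aux Finset.univ _ (fun i _ => concaveOn_log_aux (he i))
  have hS2 : ConcaveOn ℝ (Set.Ioi (0:ℝ))
      (fun t => ∑ i, (w i) ^ 2 * (t / (1 + e i * t))) :=
    concaveOn_sum_aux Finset.univ _
      (fun i _ => (concaveOn_frac_aux (he i)).smul (sq_nonneg (w i)))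
  have hC1 : ConvexOn ℝ (Set.Ioi (0:ℝ))
      (fun t => -(1/2) * ∑ i, Real.log (1 + e i * t)) := by
    have h := (hS1.smul (by norm_num : (0:ℝ) ≤ 1/2)).neg
    exact convexOn_congr' h (fun x _ => by simp [smul_eq_mul])
  have hC2 : ConvexOn ℝ (Set.Ioi (0:ℝ))
      (fun t => -(1/2) * ∑ i, (w i) ^ 2 * (t / (1 + e i * t))) := by
    have h := (hS2.smul (by norm_num : (0:ℝ) ≤ 1/2)).neg
    exact convexOn_congr' h (fun x _ => by simp [smul_eq_mul])
  have hG : ConvexOn ℝ (Set.Ioi (0:ℝ)) (fun t =>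
      (-(d : ℝ)/2 * Real.log (2 * Real.pi) - Real.log C₀.det / 2) * t
      + (-(1/2) * ∑ i, Real.log (1 + e i * t))
      + (-(1/2) * ∑ i, (w i) ^ 2 * (t / (1 + e i * t)))) := by
    have h := ((convexOn_affine_aux
      (-(d : ℝ)/2 * Real.log (2 * Real.pi) - Real.log C₀.det / 2)).add hC1).add hC2
    exact convexOn_congr' h (fun x _ => rfl)
  refine convexOn_congr' hG ?_
  intro t ht
  have ht' : (0:ℝ) < t := ht
  have hpos : ∀ i, 0 < 1 + e i * t := fun i => by nlinarith [he i]
  have hprodpos : 0 < ∏ i, (1 + e i * t) := Finset.prod_pos fun i _ => hpos i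
  have hlogdet : Real.log (C₀ + t • Λ⁻¹).det
      = Real.log C₀.det + ∑ i, Real.log (1 + e i * t) := by
    rw [hdet t ht', Real.log_mul hC₀.det_pos.ne' hprodpos.ne',
      Real.log_prod (fun i _ => (hpos i).ne')]
  rw [hlogdet, hquad t ht']
  ring
end

section
/- (General non-strict monotonicity underlying Theorem 1.) Let q : ℝ^d → [0, ∞) be a measurable probability density with respect to Lebesgue measure, let π : ℝ^d → (0, ∞) be measurable, and let M ≥ 1 be an integer. Assume q·π, q·π^{M−1}, q·π^M are Lebesgue integrable and q·log π is Lebesgue integrable. For each integer k ≥ 1 set S_{k−1} = ∫ q(θ) π(θ)^{k−1} dθ and define KL_k = log S_{k−1} − (k−1)·∫ q(θ) log π(θ) dθ, which equals the Kullback–Leibler divergence ∫ q log(q/q̃_k) of q from the normalized density q̃_k(θ) = q(θ)π(θ)^{k−1}/S_{k−1}. Then KL_{M+1} ≥ KL_M. -/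
open MeasureTheory

theorem kl_monotone_general {d : ℕ}
    (q pr : (Fin d → ℝ) → ℝ)
    (hqMeas : Measurable q) (hqNonneg : ∀ θ, 0 ≤ q θ)
    (hqProb : ∫ θ, q θ = 1)
    (hprMeas : Measurable pr) (hprPos : ∀ θ, 0 < pr θ)
    (M : ℕ) (hM : 1 ≤ M)
    (h₁ : Integrable (fun θ => q θ * pr θ))
    (hM₁ : Integrable (fun θ => q θ * pr θ ^ (M - 1)))
    (hM₂ : Integrable (fun θ => q θ * pr θ ^ M))
    (hlog : Integrable (fun θ => q θ * Real.log (pr θ))) :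
    Real.log (∫ θ, q θ * pr θ ^ M) - (M : ℝ) * ∫ θ, q θ * Real.log (pr θ) ≥
      Real.log (∫ θ, q θ * pr θ ^ (M - 1)) -
        ((M : ℝ) - 1) * ∫ θ, q θ * Real.log (pr θ) := by
  have hqInt : Integrable q := by
    by_contra h
    rw [integral_undef h] at hqProb
    norm_num at hqProb
  have hsupp : 0 < volume (Function.support q) :=
    (integral_pos_iff_support_of_nonneg hqNonneg hqInt).1 (by rw [hqProb]; norm_num)
  have hpos : ∀ n : ℕ, Integrable (fun θ => q θ * pr θ ^ n) →
      0 < ∫ θ, q θ * pr θ ^ n := by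
    intro n hint
    refine (integral_pos_iff_support_of_nonneg
      (fun θ => mul_nonneg (hqNonneg θ) (pow_nonneg (hprPos θ).le n)) hint).2 ?_
    refine lt_of_lt_of_le hsupp (measure_mono ?_)
    intro θ hθ
    simp only [Function.mem_support] at hθ ⊢
    exact mul_ne_zero hθ (pow_ne_zero n (hprPos θ).ne')
  have hSM : 0 < ∫ θ, q θ * pr θ ^ M := hpos M hM₂
  have hSM1 : 0 < ∫ θ, q θ * pr θ ^ (M - 1) := hpos (M - 1) hM₁
  set E := ∫ θ, q θ * Real.log (pr θ) with hE
  set SM := ∫ θ, q θ * pr θ ^ M with hSMdef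
  set SM1 := ∫ θ, q θ * pr θ ^ (M - 1) with hSM1def
  have hMpos : (0 : ℝ) < M := by exact_mod_cast hM
  have hM1R : (1 : ℝ) ≤ M := by exact_mod_cast hM
  have hcast : ((M - 1 : ℕ) : ℝ) = (M : ℝ) - 1 := by
    rw [Nat.cast_sub hM]; norm_num
  -- Step (B): M * E ≤ log SM  (from log x ≤ x - 1)
  have hB : (M : ℝ) * E ≤ Real.log SM := by
    have hmono : ∫ θ, ((M : ℝ) * (q θ * Real.log (pr θ)) - Real.log SM * q θ) ≤
        ∫ θ, (SM⁻¹ * (q θ * pr θ ^ M) - q θ) := by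
      apply integral_mono ((hlog.const_mul _).sub (hqInt.const_mul _))
        ((hM₂.const_mul _).sub hqInt)
      intro θ
      have h1 : (0 : ℝ) < pr θ ^ M / SM := div_pos (pow_pos (hprPos θ) M) hSM
      have h2 := Real.log_le_sub_one_of_pos h1
      rw [Real.log_div (pow_pos (hprPos θ) M).ne' hSM.ne', Real.log_pow] at h2
      have h3 := mul_le_mul_of_nonneg_left h2 (hqNonneg θ)
      have e1 : (M : ℝ) * (q θ * Real.log (pr θ)) - Real.log SM * q θ =
          q θ * ((M : ℝ) * Real.log (pr θ) - Real.log SM) := by ring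
      have e2 : SM⁻¹ * (q θ * pr θ ^ M) - q θ = q θ * (pr θ ^ M / SM - 1) := by ring
      simp only [Pi.sub_apply]
      rw [e1, e2]
      exact h3
    rw [integral_sub (hlog.const_mul _) (hqInt.const_mul _),
        integral_sub (hM₂.const_mul _) hqInt, integral_const_mul, integral_const_mul,
        integral_const_mul, ← hE, ← hSMdef, hqProb, mul_one,
        inv_mul_cancel₀ hSM.ne'] at hmono
    linarith
  -- Step (A): SM1 ≤ SM ^ ((M-1)/M)
  set a : ℝ := ((M : ℝ) - 1) / M with ha
  have ha0 : 0 ≤ a := div_nonneg (by linarith) hMpos.le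
  have h1a0 : 0 ≤ 1 - a := by
    have : a ≤ 1 := (div_le_one hMpos).2 (by linarith)
    linarith
  have hsum : a + (1 - a) = 1 := by ring
  have hMa : (M : ℝ) * a = (M : ℝ) - 1 := by
    rw [ha, mul_div_assoc', mul_div_cancel_left₀ _ hMpos.ne']
  have hp : ∀ θ, (pr θ ^ M / SM) ^ a = pr θ ^ (M - 1) / SM ^ a := by
    intro θ
    rw [Real.div_rpow (pow_nonneg (hprPos θ).le M) hSM.le]
    congr 1
    rw [← Real.rpow_natCast (pr θ) M, ← Real.rpow_mul (hprPos θ).le,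
        ← Real.rpow_natCast (pr θ) (M - 1)]
    congr 1
    rw [hcast, ← hMa]
  have hSMa : 0 < SM ^ a := Real.rpow_pos_of_pos hSM a
  have hmono2 : ∫ θ, (SM ^ a)⁻¹ * (q θ * pr θ ^ (M - 1)) ≤
      ∫ θ, ((a / SM) * (q θ * pr θ ^ M) + (1 - a) * q θ) := by
    apply integral_mono (hM₁.const_mul _) ((hM₂.const_mul _).add (hqInt.const_mul _))
    intro θ
    simp only [Pi.add_apply]
    have hgm := Real.geom_mean_le_arith_mean2_weighted ha0 h1a0
      (le_of_lt (div_pos (pow_pos (hprPos θ) M) hSM)) zero_le_one hsum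
    rw [Real.one_rpow, mul_one, mul_one, hp θ] at hgm
    have h4 := mul_le_mul_of_nonneg_left hgm (hqNonneg θ)
    calc (SM ^ a)⁻¹ * (q θ * pr θ ^ (M - 1))
        = q θ * (pr θ ^ (M - 1) / SM ^ a) := by ring
      _ ≤ q θ * (a * (pr θ ^ M / SM) + (1 - a)) := h4
      _ = (a / SM) * (q θ * pr θ ^ M) + (1 - a) * q θ := by ring
  rw [integral_const_mul, integral_add (hM₂.const_mul _) (hqInt.const_mul _),
      integral_const_mul, integral_const_mul, ← hSMdef, ← hSM1def, hqProb,
      div_mul_cancel₀ _ hSM.ne', mul_one] at hmono2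
  have hSM1le : SM1 ≤ SM ^ a := by
    have h5 : (SM ^ a)⁻¹ * SM1 ≤ 1 := by linarith
    have h6 := mul_le_mul_of_nonneg_left h5 hSMa.le
    rw [← mul_assoc, mul_inv_cancel₀ hSMa.ne', one_mul, mul_one] at h6
    exact h6
  have hlogle : Real.log SM1 ≤ a * Real.log SM := by
    calc Real.log SM1 ≤ Real.log (SM ^ a) := Real.log_le_log hSM1 hSM1le
      _ = a * Real.log SM := Real.log_rpow hSM a
  have hA : (M : ℝ) * Real.log SM1 ≤ ((M : ℝ) - 1) * Real.log SM := by
    have := mul_le_mul_of_nonneg_left hlogle hMpos.le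
    rw [← mul_assoc, hMa] at this
    exact this
  -- combine
  have key : 0 ≤ (M : ℝ) * (Real.log SM - Real.log SM1 - E) := by nlinarith
  have : 0 ≤ Real.log SM - Real.log SM1 - E := nonneg_of_mul_nonneg_right ?h hMpos
  · linarith
  case h => linarith [key]
end

section
/- (Theorem 1 of the paper, Gaussian case.) Let d ≥ 1, θ₀, μ ∈ ℝ^d, and let C₀ and Λ be symmetric positive definite d×d real matrices. Let q(θ) = f(θ; μ, Λ⁻¹) and π(θ) = f(θ; θ₀, C₀). For each integer M ≥ 1 set S_{M−1} = ∫_{ℝ^d} q(θ) π(θ)^{M−1} dθ and KL_M = log S_{M−1} − (M−1)·∫_{ℝ^d} q(θ) log π(θ) dθ, which equals the Kullback–Leibler divergence of q from the normalized density q̃_M(θ) = q(θ)π(θ)^{M−1}/S_{M−1}. Then the sequence (KL_M)_{M ≥ 1} is strictly increasing: KL_{M+1} > KL_M for every integer M ≥ 1. -/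
open MeasureTheory Matrix

variable {d : ℕ}

lemma dot_self_eq_sum_sq (v : Fin d → ℝ) : v ⬝ᵥ v = ∑ i, v i ^ 2 := by
  simp [dotProduct, sq]

open scoped MatrixOrder Matrix.Norms.L2Operator in
lemma quad_sq {A : Matrix (Fin d) (Fin d) ℝ} (hA : A.PosDef) :
    ∃ B : Matrix (Fin d) (Fin d) ℝ, B.det * B.det = A.det ∧ B.det ≠ 0 ∧
      ∀ v : Fin d → ℝ, v ⬝ᵥ (A *ᵥ v) = ∑ i, (B *ᵥ v) i ^ 2 := by
  have hdd : (CFC.sqrt A).det * (CFC.sqrt A).det = A.det := by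
    rw [← Matrix.det_mul, CFC.sqrt_mul_sqrt_self A hA.posSemidef.nonneg]
  refine ⟨CFC.sqrt A, hdd, ?_, ?_⟩
  · intro h0
    rw [h0, mul_zero] at hdd
    exact hA.det_pos.ne' hdd.symm
  intro v
  set B := CFC.sqrt A with hB
  have hsym : Bᵀ = B := by
    have := (CFC.sqrt_nonneg A).posSemidef.isHermitian
    rw [hB, ← Matrix.conjTranspose_eq_transpose_of_trivial]; exact this
  calc v ⬝ᵥ (A *ᵥ v) = v ⬝ᵥ ((B * B) *ᵥ v) := by rw [CFC.sqrt_mul_sqrt_self A hA.posSemidef.nonneg]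
    _ = v ⬝ᵥ (B *ᵥ (B *ᵥ v)) := by rw [Matrix.mulVec_mulVec]
    _ = (v ᵥ* B) ⬝ᵥ (B *ᵥ v) := by rw [Matrix.dotProduct_mulVec]
    _ = (B *ᵥ v) ⬝ᵥ (B *ᵥ v) := by rw [← hsym, Matrix.vecMul_transpose, hsym]
    _ = ∑ i, (B *ᵥ v) i ^ 2 := dot_self_eq_sum_sq _

lemma mulVec_sq_sum_le (M : Matrix (Fin d) (Fin d) ℝ) (v : Fin d → ℝ) :
    ∑ i, (M *ᵥ v) i ^ 2 ≤ (∑ i, ∑ j, M i j ^ 2) * ∑ j, v j ^ 2 := by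
  rw [Finset.sum_mul]
  refine Finset.sum_le_sum fun i _ => ?_
  have h : (M *ᵥ v) i = ∑ j, M i j * v j := by simp [Matrix.mulVec, dotProduct]
  rw [h]
  exact Finset.sum_mul_sq_le_sq_mul_sq Finset.univ _ _

lemma quad_nonneg {A : Matrix (Fin d) (Fin d) ℝ} (hA : A.PosDef) (v : Fin d → ℝ) :
    0 ≤ v ⬝ᵥ (A *ᵥ v) := by
  rcases eq_or_ne v 0 with rfl | hv
  · simp
  · simpa using (hA.dotProduct_mulVec_pos hv).le

lemma quad_pos {A : Matrix (Fin d) (Fin d) ℝ} (hA : A.PosDef) {v : Fin d → ℝ} (hv : v ≠ 0) :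
    0 < v ⬝ᵥ (A *ᵥ v) := by
  simpa using hA.dotProduct_mulVec_pos hv

lemma quad_lower {A : Matrix (Fin d) (Fin d) ℝ} (hA : A.PosDef) :
    ∃ ε : ℝ, 0 < ε ∧ ∀ v : Fin d → ℝ, ε * ∑ i, v i ^ 2 ≤ v ⬝ᵥ (A *ᵥ v) := by
  obtain ⟨B, _, hdetB, hBq⟩ := quad_sq hA
  set κ : ℝ := ∑ i, ∑ j, (B⁻¹) i j ^ 2 with hκ
  have hκ0 : 0 ≤ κ := Finset.sum_nonneg fun i _ => Finset.sum_nonneg fun j _ => sq_nonneg _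
  have hκ1 : (0:ℝ) < κ + 1 := by linarith
  refine ⟨(κ + 1)⁻¹, inv_pos.mpr hκ1, fun v => ?_⟩
  have hv : B⁻¹ *ᵥ (B *ᵥ v) = v := by
    rw [Matrix.mulVec_mulVec, Matrix.nonsing_inv_mul _ (by simpa using hdetB.isUnit),
      Matrix.one_mulVec]
  have hs0 : 0 ≤ ∑ i, (B *ᵥ v) i ^ 2 :=
    Finset.sum_nonneg fun i _ => sq_nonneg _
  have h1 : ∑ i, v i ^ 2 ≤ κ * ∑ i, (B *ᵥ v) i ^ 2 := by
    conv_lhs => rw [← hv]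
    exact mulVec_sq_sum_le _ _
  rw [hBq v, inv_mul_le_iff₀ hκ1]
  nlinarith

lemma quad_upper (A : Matrix (Fin d) (Fin d) ℝ) (v : Fin d → ℝ) :
    |v ⬝ᵥ (A *ᵥ v)| ≤ (∑ i, ∑ j, |A i j|) * ∑ k, v k ^ 2 := by
  have hexp : v ⬝ᵥ (A *ᵥ v) = ∑ i, ∑ j, v i * (A i j * v j) := by
    simp [dotProduct, Matrix.mulVec, Finset.mul_sum]
  rw [hexp, Finset.sum_mul]
  refine (Finset.abs_sum_le_sum_abs _ _).trans (Finset.sum_le_sum fun i _ => ?_)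
  rw [Finset.sum_mul]
  refine (Finset.abs_sum_le_sum_abs _ _).trans (Finset.sum_le_sum fun j _ => ?_)
  have h1 : |v i * (A i j * v j)| = |A i j| * (|v i| * |v j|) := by
    rw [abs_mul, abs_mul]; ring
  rw [h1]
  refine mul_le_mul_of_nonneg_left ?_ (abs_nonneg _)
  have h2 : |v i| * |v j| ≤ (v i ^ 2 + v j ^ 2) / 2 := by
    nlinarith [sq_nonneg (|v i| - |v j|), sq_abs (v i), sq_abs (v j)]
  have hi : v i ^ 2 ≤ ∑ k, v k ^ 2 :=
    Finset.single_le_sum (fun k _ => sq_nonneg (v k)) (Finset.mem_univ i)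
  have hj : v j ^ 2 ≤ ∑ k, v k ^ 2 :=
    Finset.single_le_sum (fun k _ => sq_nonneg (v k)) (Finset.mem_univ j)
  linarith

variable {d : ℕ}

lemma continuous_quad (P : Matrix (Fin d) (Fin d) ℝ) (c : Fin d → ℝ) :
    Continuous fun x : Fin d → ℝ => (x - c) ⬝ᵥ (P *ᵥ (x - c)) := by
  simp only [dotProduct, Matrix.mulVec, Pi.sub_apply]
  refine continuous_finset_sum _ fun i _ => Continuous.mul ?_ ?_
  · exact (continuous_apply i).sub continuous_const
  · exact continuous_finset_sum _ fun j _ =>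
      continuous_const.mul ((continuous_apply j).sub continuous_const)

lemma integrable_exp_neg_sum_sq {c : ℝ} (hc : 0 < c) :
    Integrable (fun y : Fin d → ℝ => Real.exp (-c * ∑ i, y i ^ 2)) := by
  have h : (fun y : Fin d → ℝ => Real.exp (-c * ∑ i, y i ^ 2)) =
      fun y : Fin d → ℝ => ∏ i, Real.exp (-c * y i ^ 2) := by
    funext y
    rw [← Real.exp_sum, Finset.mul_sum]
  rw [h]
  exact Integrable.fintype_prod fun i => integrable_exp_neg_mul_sq hc

lemma integral_exp_neg_half_sum_sq :
    ∫ y : Fin d → ℝ, Real.exp (-(1/2) * ∑ i, y i ^ 2) =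
      Real.sqrt (2 * Real.pi) ^ d := by
  have h : (fun y : Fin d → ℝ => Real.exp (-(1/2) * ∑ i, y i ^ 2)) =
      fun y : Fin d → ℝ => ∏ i, Real.exp (-(1/2) * y i ^ 2) := by
    funext y
    rw [← Real.exp_sum, Finset.mul_sum]
  have hp := integral_fintype_prod_eq_pow (ι := Fin d) (fun t : ℝ => Real.exp (-(1/2) * t ^ 2))
    (μ := volume)
  rw [← volume_pi] at hp
  rw [h, hp,
    integral_gaussian, Fintype.card_fin]
  rw [Real.sqrt_mul (by norm_num : (0:ℝ) ≤ 2)]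
  norm_num [mul_comm]

lemma integrable_comp_sub {f : (Fin d → ℝ) → ℝ} (hf : Integrable f) (m : Fin d → ℝ) :
    Integrable (fun x => f (x - m)) := by
  have h := (measurePreserving_add_right (volume : Measure (Fin d → ℝ)) (-m)).integrable_comp_emb
    (MeasurableEquiv.addRight (-m)).measurableEmbedding (g := f)
  simp only [Function.comp_def] at h
  simpa [sub_eq_add_neg] using h.mpr hf

lemma integral_comp_sub (f : (Fin d → ℝ) → ℝ) (m : Fin d → ℝ) :
    ∫ x, f (x - m) = ∫ x, f x := by
  simpa [sub_eq_add_neg] using integral_add_right_eq_self f (-m)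

lemma integral_comp_mulVec {B : Matrix (Fin d) (Fin d) ℝ} (hB : B.det ≠ 0)
    {f : (Fin d → ℝ) → ℝ} (hf : Continuous f) :
    ∫ x, f (B *ᵥ x) = |B.det|⁻¹ * ∫ y, f y := by
  have hmeas : Measurable (Matrix.toLin' B) :=
    (LinearMap.continuous_on_pi _).measurable
  have h1 : ∫ x, f (B *ᵥ x) = ∫ y, f y ∂(Measure.map (Matrix.toLin' B) volume) := by
    rw [integral_map hmeas.aemeasurable hf.aestronglyMeasurable]
    simp [Matrix.toLin'_apply]
  rw [h1, Real.map_matrix_volume_pi_eq_smul_volume_pi hB, integral_smul_measure,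
    ENNReal.toReal_ofReal (by positivity), smul_eq_mul, abs_inv]
variable {d : ℕ}

lemma decay_bound {a b c u : ℝ} (ha : 0 ≤ a) (hb : 0 ≤ b) (hc : 0 < c) (hu : 0 ≤ u) :
    (a + b * u) * Real.exp (-c * u) ≤ (a + 2 * b / c) * Real.exp (-(c/2) * u) := by
  have hsplit : Real.exp (-c * u) = Real.exp (-(c/2) * u) * Real.exp (-(c/2) * u) := by
    rw [← Real.exp_add]; ring_nf
  have h1 : Real.exp (-c * u) ≤ Real.exp (-(c/2) * u) := by
    apply Real.exp_le_exp.mpr; nlinarith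
  have h2 : u * Real.exp (-(c/2) * u) ≤ 2 / c := by
    have hle : (c/2) * u ≤ Real.exp ((c/2) * u) := by
      have := Real.add_one_le_exp ((c/2) * u); nlinarith
    have hpos := Real.exp_pos ((c/2) * u)
    rw [(by ring : -(c/2) * u = -(c/2 * u)), Real.exp_neg, le_div_iff₀ hc]
    calc u * (Real.exp ((c/2) * u))⁻¹ * c = (c * u) * (Real.exp ((c/2)*u))⁻¹ := by ring
      _ ≤ (2 * Real.exp ((c/2) * u)) * (Real.exp ((c/2)*u))⁻¹ := by
          apply mul_le_mul_of_nonneg_right (by nlinarith) (by positivity)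
      _ = 2 := by field_simp
  have hexp2 : (0:ℝ) ≤ Real.exp (-(c/2) * u) := (Real.exp_pos _).le
  have h3 : b * u * Real.exp (-c * u) ≤ 2 * b / c * Real.exp (-(c/2) * u) := by
    rw [hsplit]
    calc b * u * (Real.exp (-(c/2) * u) * Real.exp (-(c/2) * u))
        = b * (u * Real.exp (-(c/2) * u)) * Real.exp (-(c/2) * u) := by ring
      _ ≤ b * (2 / c) * Real.exp (-(c/2) * u) := by
          apply mul_le_mul_of_nonneg_right (mul_le_mul_of_nonneg_left h2 hb) hexp2
      _ = 2 * b / c * Real.exp (-(c/2) * u) := by ring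
  have h4 : a * Real.exp (-c * u) ≤ a * Real.exp (-(c/2) * u) :=
    mul_le_mul_of_nonneg_left h1 ha
  nlinarith [h3, h4]
lemma integrable_bound_gauss {P : Matrix (Fin d) (Fin d) ℝ} (hP : P.PosDef) (m : Fin d → ℝ)
    {g : (Fin d → ℝ) → ℝ} (hg : Continuous g) {a b : ℝ} (ha : 0 ≤ a) (hb : 0 ≤ b)
    (hbound : ∀ x, |g x| ≤ a + b * ∑ i, (x - m) i ^ 2) :
    Integrable fun x => g x * Real.exp (-(1/2) * ((x - m) ⬝ᵥ (P *ᵥ (x - m)))) := by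
  obtain ⟨ε, hε, hQ⟩ := quad_lower hP
  set c : ℝ := ε / 2 with hc
  have hc0 : 0 < c := by positivity
  have hmaj : Integrable fun x : Fin d → ℝ =>
      (a + 2 * b / c) * Real.exp (-(c/2) * ∑ i, (x - m) i ^ 2) := by
    have h0 : Integrable fun y : Fin d → ℝ => Real.exp (-(c/2) * ∑ i, y i ^ 2) :=
      integrable_exp_neg_sum_sq (by positivity)
    exact (integrable_comp_sub h0 m).const_mul _
  refine hmaj.mono' ?_ (ae_of_all _ fun x => ?_)
  · have hcont : Continuous fun x : Fin d → ℝ =>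
        g x * Real.exp (-(1/2) * ((x - m) ⬝ᵥ (P *ᵥ (x - m)))) :=
      hg.mul (Real.continuous_exp.comp (continuous_const.mul (continuous_quad P m)))
    exact hcont.aestronglyMeasurable
  · set u : ℝ := ∑ i, (x - m) i ^ 2 with hu
    have hu0 : 0 ≤ u := Finset.sum_nonneg fun i _ => sq_nonneg _
    have hexp : Real.exp (-(1/2) * ((x - m) ⬝ᵥ (P *ᵥ (x - m)))) ≤ Real.exp (-c * u) := by
      apply Real.exp_le_exp.mpr
      have := hQ (x - m)
      rw [hc]; nlinarith
    have h1 : ‖g x * Real.exp (-(1/2) * ((x - m) ⬝ᵥ (P *ᵥ (x - m))))‖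
        ≤ (a + b * u) * Real.exp (-c * u) := by
      rw [norm_mul, Real.norm_eq_abs, Real.norm_eq_abs, Real.abs_exp]
      have hb1 := hbound x
      have hge : (0:ℝ) ≤ a + b * u := by positivity
      exact mul_le_mul hb1 hexp (Real.exp_pos _).le hge
    exact h1.trans (decay_bound ha hb hc0 hu0)

lemma integrable_gauss {P : Matrix (Fin d) (Fin d) ℝ} (hP : P.PosDef) (m : Fin d → ℝ) :
    Integrable fun x : Fin d → ℝ => Real.exp (-(1/2) * ((x - m) ⬝ᵥ (P *ᵥ (x - m)))) := by
  have h := integrable_bound_gauss hP m (g := fun _ => (1:ℝ)) continuous_const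
    (a := 1) (b := 0) zero_le_one (le_refl (0:ℝ)) (fun x => by simp)
  simpa using h

lemma integral_gauss_eq {P : Matrix (Fin d) (Fin d) ℝ} (hP : P.PosDef) (m : Fin d → ℝ) :
    ∫ x : Fin d → ℝ, Real.exp (-(1/2) * ((x - m) ⬝ᵥ (P *ᵥ (x - m))))
      = Real.sqrt (2 * Real.pi) ^ d * (Real.sqrt P.det)⁻¹ := by
  obtain ⟨B, hBB, hdetB, hBq⟩ := quad_sq hP
  have hcont : Continuous fun z : Fin d → ℝ => Real.exp (-(1/2) * ∑ i, z i ^ 2) :=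
    Real.continuous_exp.comp (continuous_const.mul
      (continuous_finset_sum _ fun i _ => (continuous_apply i).pow 2))
  have h1 : ∫ x : Fin d → ℝ, Real.exp (-(1/2) * ((x - m) ⬝ᵥ (P *ᵥ (x - m))))
      = ∫ y : Fin d → ℝ, Real.exp (-(1/2) * (y ⬝ᵥ (P *ᵥ y))) :=
    integral_comp_sub (fun y => Real.exp (-(1/2) * (y ⬝ᵥ (P *ᵥ y)))) m
  have h2 : (fun y : Fin d → ℝ => Real.exp (-(1/2) * (y ⬝ᵥ (P *ᵥ y))))
      = fun y : Fin d → ℝ => Real.exp (-(1/2) * ∑ i, (B *ᵥ y) i ^ 2) := by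
    funext y; rw [hBq y]
  have h3 := integral_comp_mulVec hdetB hcont
  have hBP : |B.det| = Real.sqrt P.det := by
    rw [← hBB, ← sq, Real.sqrt_sq_eq_abs]
  rw [h1, h2, h3, integral_exp_neg_half_sum_sq, hBP]
  ring
lemma integral_cauchy_schwarz {f g : (Fin d → ℝ) → ℝ}
    (hf2 : Integrable fun x => f x ^ 2) (hg2 : Integrable fun x => g x ^ 2)
    (hfg : Integrable fun x => f x * g x) (hB : 0 < ∫ x, g x ^ 2) :
    (∫ x, f x * g x) ^ 2 ≤ (∫ x, f x ^ 2) * ∫ x, g x ^ 2 := by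
  set A := ∫ x, f x ^ 2 with hA
  set Bv := ∫ x, g x ^ 2 with hBv
  set C := ∫ x, f x * g x with hC
  have hfun : (fun x => (Bv * f x - C * g x) ^ 2)
      = fun x => Bv ^ 2 * f x ^ 2 - 2 * Bv * C * (f x * g x) + C ^ 2 * g x ^ 2 := by
    funext x; ring
  have key : ∫ x, (Bv * f x - C * g x) ^ 2 = Bv ^ 2 * A - 2 * Bv * C * C + C ^ 2 * Bv := by
    rw [hfun]
    have e1 : Integrable fun x => Bv ^ 2 * f x ^ 2 - 2 * Bv * C * (f x * g x) :=
      (hf2.const_mul _).sub (hfg.const_mul _)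
    rw [integral_add e1 (hg2.const_mul _), integral_sub (hf2.const_mul _) (hfg.const_mul _),
      MeasureTheory.integral_const_mul, MeasureTheory.integral_const_mul, MeasureTheory.integral_const_mul]
  have h0 : 0 ≤ ∫ x, (Bv * f x - C * g x) ^ 2 := integral_nonneg fun x => sq_nonneg _
  rw [key] at h0
  nlinarith [hB, h0]

lemma integral_pos_of_pos {f : (Fin d → ℝ) → ℝ}
    (hpos : ∀ x, 0 < f x) (hfi : Integrable f) : 0 < ∫ x, f x := by
  rw [integral_pos_iff_support_of_nonneg (fun x => (hpos x).le) hfi]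
  have hsupp : Function.support f = Set.univ := by
    ext x; simp [Function.mem_support, (hpos x).ne']
  rw [hsupp]
  exact IsOpen.measure_pos volume isOpen_univ Set.univ_nonempty


lemma two_pi_pos : (0:ℝ) < 2 * Real.pi := by positivity

lemma gaussDensity_integral_one {S : Matrix (Fin d) (Fin d) ℝ} (hS : S.PosDef)
    (m : Fin d → ℝ) : ∫ x, gaussDensity m S x = 1 := by
  have hSinv : S⁻¹.PosDef := hS.inv
  have hdet : 0 < S.det := hS.det_pos
  have hdetinv : S⁻¹.det = S.det⁻¹ := by
    rw [Matrix.det_nonsing_inv, Ring.inverse_eq_inv']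
  unfold gaussDensity
  rw [MeasureTheory.integral_const_mul, integral_gauss_eq hSinv m, hdetinv, Real.sqrt_inv]
  have h1 : Real.sqrt (2 * Real.pi) ^ d = (2 * Real.pi) ^ ((d : ℝ) / 2) := by
    rw [Real.sqrt_eq_rpow, ← Real.rpow_natCast ((2 * Real.pi) ^ (1/(2:ℝ))) d,
      ← Real.rpow_mul two_pi_pos.le]
    ring_nf
  have h2 : Real.sqrt S.det = S.det ^ ((1:ℝ)/2) := Real.sqrt_eq_rpow _
  rw [h1, h2, inv_inv]
  rw [show (2 * Real.pi) ^ (-(d : ℝ) / 2) * S.det ^ (-(1 : ℝ) / 2) *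
      ((2 * Real.pi) ^ ((d : ℝ) / 2) * S.det ^ ((1:ℝ)/2))
    = ((2 * Real.pi) ^ (-(d : ℝ) / 2) * (2 * Real.pi) ^ ((d : ℝ) / 2)) *
      (S.det ^ (-(1 : ℝ) / 2) * S.det ^ ((1:ℝ)/2)) from by ring]
  rw [← Real.rpow_add two_pi_pos, ← Real.rpow_add hdet,
    show -(d:ℝ)/2 + (d:ℝ)/2 = 0 by ring, show -(1:ℝ)/2 + (1:ℝ)/2 = 0 by ring,
    Real.rpow_zero, Real.rpow_zero, mul_one]

theorem kl_strict_increasing_gaussian {d : ℕ} (hd : 1 ≤ d)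
    (θ₀ μ : Fin d → ℝ) (C₀ Λ : Matrix (Fin d) (Fin d) ℝ)
    (hC₀ : C₀.PosDef) (hΛ : Λ.PosDef)
    (q pr : (Fin d → ℝ) → ℝ)
    (hq : q = gaussDensity μ Λ⁻¹) (hpr : pr = gaussDensity θ₀ C₀)
    (KL : ℕ → ℝ)
    (hKL : ∀ M : ℕ, 1 ≤ M →
      KL M = Real.log (∫ θ, q θ * pr θ ^ (M - 1)) -
        ((M : ℝ) - 1) * ∫ θ, q θ * Real.log (pr θ)) :
    ∀ M : ℕ, 1 ≤ M → KL (M + 1) > KL M := by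
  have hP : (C₀⁻¹).PosDef := hC₀.inv
  have hLinv : (Λ⁻¹)⁻¹ = Λ := Matrix.nonsing_inv_nonsing_inv Λ hΛ.det_pos.ne'.isUnit
  set cq : ℝ := (2 * Real.pi) ^ (-(d : ℝ) / 2) * (Λ⁻¹).det ^ (-(1 : ℝ) / 2) with hcqdef
  set cp : ℝ := (2 * Real.pi) ^ (-(d : ℝ) / 2) * C₀.det ^ (-(1 : ℝ) / 2) with hcpdef
  have hcq : 0 < cq := mul_pos (Real.rpow_pos_of_pos (by positivity) _)
    (Real.rpow_pos_of_pos hΛ.inv.det_pos _)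
  have hcp : 0 < cp := mul_pos (Real.rpow_pos_of_pos (by positivity) _)
    (Real.rpow_pos_of_pos hC₀.det_pos _)
  have hqx : ∀ x, q x = cq * Real.exp (-(1/2) * ((x - μ) ⬝ᵥ (Λ *ᵥ (x - μ)))) := by
    intro x; rw [hq]; unfold gaussDensity; rw [hLinv]
  have hprx : ∀ x, pr x = cp * Real.exp (-(1/2) * ((x - θ₀) ⬝ᵥ (C₀⁻¹ *ᵥ (x - θ₀)))) := by
    intro x; rw [hpr]; rfl
  have hq0 : ∀ x, 0 < q x := fun x => by rw [hqx x]; positivity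
  have hp0 : ∀ x, 0 < pr x := fun x => by rw [hprx x]; positivity
  have hqcont : Continuous q := by
    rw [show q = fun x => cq * Real.exp (-(1/2) * ((x - μ) ⬝ᵥ (Λ *ᵥ (x - μ)))) from
      funext hqx]
    exact continuous_const.mul (Real.continuous_exp.comp
      (continuous_const.mul (continuous_quad Λ μ)))
  have hpcont : Continuous pr := by
    rw [show pr = fun x => cp * Real.exp (-(1/2) * ((x - θ₀) ⬝ᵥ (C₀⁻¹ *ᵥ (x - θ₀)))) from
      funext hprx]
    exact continuous_const.mul (Real.continuous_exp.comp
      (continuous_const.mul (continuous_quad C₀⁻¹ θ₀)))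
  have hple : ∀ x, pr x ≤ cp := by
    intro x
    rw [hprx x]
    nth_rewrite 2 [show cp = cp * 1 from (mul_one cp).symm]
    refine mul_le_mul_of_nonneg_left ?_ hcp.le
    rw [Real.exp_le_one_iff]
    have := quad_nonneg hP (x - θ₀)
    nlinarith
  -- integrability of q
  have hqint : Integrable q := by
    rw [show q = fun x => cq * Real.exp (-(1/2) * ((x - μ) ⬝ᵥ (Λ *ᵥ (x - μ)))) from
      funext hqx]
    exact (integrable_gauss hΛ μ).const_mul cq
  -- integrability of q * pr^n
  have hSint : ∀ n : ℕ, Integrable fun x => q x * pr x ^ n := by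
    intro n
    refine (hqint.const_mul (cp ^ n)).mono'
      ((hqcont.mul (hpcont.pow n)).aestronglyMeasurable) (ae_of_all _ fun x => ?_)
    rw [Real.norm_eq_abs,
      abs_of_nonneg (mul_nonneg (hq0 x).le (pow_nonneg (hp0 x).le n))]
    calc q x * pr x ^ n ≤ q x * cp ^ n :=
          mul_le_mul_of_nonneg_left (pow_le_pow_left₀ (hp0 x).le (hple x) n) (hq0 x).le
      _ = cp ^ n * q x := mul_comm _ _
  -- integrability of q * log pr
  have hQq : Integrable fun x => ((x - θ₀) ⬝ᵥ (C₀⁻¹ *ᵥ (x - θ₀))) * q x := by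
    set K : ℝ := ∑ i, ∑ j, |(C₀⁻¹) i j| with hK
    have hK0 : 0 ≤ K := Finset.sum_nonneg fun i _ => Finset.sum_nonneg fun j _ => abs_nonneg _
    have hb : ∀ x : Fin d → ℝ, |(x - θ₀) ⬝ᵥ (C₀⁻¹ *ᵥ (x - θ₀))|
        ≤ (2 * K * ∑ i, (μ - θ₀) i ^ 2) + (2 * K) * ∑ i, (x - μ) i ^ 2 := by
      intro x
      refine (quad_upper C₀⁻¹ (x - θ₀)).trans ?_
      have hsum : ∑ i, (x - θ₀) i ^ 2 ≤ 2 * ∑ i, (x - μ) i ^ 2 + 2 * ∑ i, (μ - θ₀) i ^ 2 := by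
        rw [Finset.mul_sum, Finset.mul_sum, ← Finset.sum_add_distrib]
        refine Finset.sum_le_sum fun i _ => ?_
        have he : (x - θ₀) i = (x - μ) i + (μ - θ₀) i := by
          simp only [Pi.sub_apply]; ring
        rw [he]
        nlinarith [sq_nonneg ((x - μ) i - (μ - θ₀) i)]
      nlinarith [Finset.sum_nonneg fun i (_ : i ∈ Finset.univ) => sq_nonneg ((x - θ₀) i)]
    have h1 : Integrable fun x => ((x - θ₀) ⬝ᵥ (C₀⁻¹ *ᵥ (x - θ₀))) *
        Real.exp (-(1/2) * ((x - μ) ⬝ᵥ (Λ *ᵥ (x - μ)))) :=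
      integrable_bound_gauss hΛ μ (continuous_quad C₀⁻¹ θ₀)
        (by positivity) (by positivity) hb
    refine (h1.const_mul cq).congr (ae_of_all _ fun x => ?_)
    simp only [hqx]; ring
  have hLint : Integrable fun x => q x * Real.log (pr x) := by
    have h1 : Integrable fun x => Real.log cp * q x +
        (-(1/2)) * (((x - θ₀) ⬝ᵥ (C₀⁻¹ *ᵥ (x - θ₀))) * q x) :=
      (hqint.const_mul _).add (hQq.const_mul _)
    refine h1.congr (ae_of_all _ fun x => ?_)
    simp only [hprx]
    rw [Real.log_mul hcp.ne' (Real.exp_ne_zero _), Real.log_exp]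
    ring
  -- the sequence S
  set S : ℕ → ℝ := fun n => ∫ x, q x * pr x ^ n with hSdef
  have hSpos : ∀ n, 0 < S n := fun n =>
    integral_pos_of_pos (fun x => mul_pos (hq0 x) (pow_pos (hp0 x) n)) (hSint n)
  have hS0 : S 0 = 1 := by
    have : S 0 = ∫ x, q x := by
      rw [hSdef]; simp only [pow_zero, mul_one]
    rw [this, hq]
    exact gaussDensity_integral_one hΛ.inv μ
  -- Cauchy-Schwarz
  have hCS : ∀ n : ℕ, S (n+1) ^ 2 ≤ S n * S (n+2) := by
    intro n
    set f : (Fin d → ℝ) → ℝ := fun x => Real.sqrt (q x * pr x ^ n) with hf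
    set g : (Fin d → ℝ) → ℝ := fun x => Real.sqrt (q x * pr x ^ (n+2)) with hg
    have hmn : ∀ (m : ℕ) x, 0 ≤ q x * pr x ^ m := fun m x =>
      mul_nonneg (hq0 x).le (pow_nonneg (hp0 x).le m)
    have hf2 : (fun x => f x ^ 2) = fun x => q x * pr x ^ n :=
      funext fun x => Real.sq_sqrt (hmn n x)
    have hg2 : (fun x => g x ^ 2) = fun x => q x * pr x ^ (n+2) :=
      funext fun x => Real.sq_sqrt (hmn (n+2) x)
    have hfg : (fun x => f x * g x) = fun x => q x * pr x ^ (n+1) := by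
      funext x
      rw [hf, hg, ← Real.sqrt_mul (hmn n x),
        show q x * pr x ^ n * (q x * pr x ^ (n+2)) = (q x * pr x ^ (n+1)) ^ 2 from by ring,
        Real.sqrt_sq (hmn (n+1) x)]
    have := integral_cauchy_schwarz (f := f) (g := g)
      (by rw [hf2]; exact hSint n) (by rw [hg2]; exact hSint (n+2))
      (by rw [hfg]; exact hSint (n+1)) (by rw [hg2]; exact hSpos (n+2))
    rw [hf2, hg2, hfg] at this
    exact this
  -- ratio monotonicity
  have hstep : ∀ n : ℕ, S 1 * S n ≤ S (n+1) := by
    intro n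
    induction n with
    | zero => rw [hS0, mul_one]
    | succ n ih =>
      have h1 : S 1 * S (n+1) * S n ≤ S (n+2) * S n := by
        calc S 1 * S (n+1) * S n = (S 1 * S n) * S (n+1) := by ring
          _ ≤ S (n+1) * S (n+1) := mul_le_mul_of_nonneg_right ih (hSpos (n+1)).le
          _ = S (n+1) ^ 2 := (sq (S (n+1))).symm
          _ ≤ S n * S (n+2) := hCS n
          _ = S (n+2) * S n := mul_comm _ _
      exact le_of_mul_le_mul_right h1 (hSpos n)
  -- Jensen: L < log (S 1)
  set L : ℝ := ∫ x, q x * Real.log (pr x) with hLdef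
  have hLlt : L < Real.log (S 1) := by
    set ν : Measure (Fin d → ℝ) :=
      volume.withDensity fun x => ((Real.toNNReal (q x) : NNReal) : ENNReal) with hν
    have hdens_meas : Measurable fun x => Real.toNNReal (q x) :=
      (continuous_real_toNNReal.comp hqcont).measurable
    have hIconv : ∀ g : (Fin d → ℝ) → ℝ, (∫ x, g x ∂ν) = ∫ x, q x * g x := by
      intro g
      rw [hν, integral_withDensity_eq_integral_smul hdens_meas]
      congr 1
      funext x
      rw [NNReal.smul_def, Real.coe_toNNReal _ (hq0 x).le, smul_eq_mul]
    have hIntconv : ∀ g : (Fin d → ℝ) → ℝ,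
        Integrable g ν ↔ Integrable (fun x => q x * g x) volume := by
      intro g
      rw [hν, integrable_withDensity_iff_integrable_smul hdens_meas]
      have he : (fun x => Real.toNNReal (q x) • g x) = fun x => q x * g x :=
        funext fun x => by rw [NNReal.smul_def, Real.coe_toNNReal _ (hq0 x).le, smul_eq_mul]
      rw [he]
    have hprob : IsProbabilityMeasure ν := by
      constructor
      rw [hν, withDensity_apply _ MeasurableSet.univ, setLIntegral_univ]
      have h1 : ∫⁻ x, ((Real.toNNReal (q x) : NNReal) : ENNReal) = ENNReal.ofReal (∫ x, q x) := by
        rw [ofReal_integral_eq_lintegral_ofReal hqint (ae_of_all _ fun x => (hq0 x).le)]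
        rfl
      have h2 : ∫ x, q x = 1 := by
        rw [hq]; exact gaussDensity_integral_one hΛ.inv μ
      rw [h1, h2, ENNReal.ofReal_one]
    have hprInt : Integrable pr ν := (hIntconv pr).mpr (by simpa [pow_one] using hSint 1)
    have hlogInt : Integrable (fun x => Real.log (pr x)) ν := (hIntconv _).mpr hLint
    have hexpcomp : Integrable (Real.exp ∘ fun x => Real.log (pr x)) ν := by
      refine hprInt.congr (ae_of_all _ fun x => ?_)
      simp only [Function.comp_apply]
      rw [Real.exp_log (hp0 x)]
    have hJ := strictConvexOn_exp.ae_eq_const_or_map_average_lt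
      Real.continuous_exp.continuousOn isClosed_univ
      (ae_of_all _ fun x => Set.mem_univ _) hlogInt hexpcomp
    rcases hJ with hconst | hlt
    · exfalso
      set c : ℝ := ⨍ x, Real.log (pr x) ∂ν with hcdef
      have hae : ∀ᵐ x ∂ν, Real.log (pr x) = c := hconst
      have hdm2 : Measurable fun x => ((Real.toNNReal (q x) : NNReal) : ENNReal) :=
        measurable_coe_nnreal_ennreal.comp hdens_meas
      rw [hν, ae_withDensity_iff hdm2] at hae
      have hae' : ∀ᵐ x ∂(volume : Measure (Fin d → ℝ)), Real.log (pr x) = c := by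
        refine hae.mono fun x hx => hx ?_
        simp only [Function.comp_apply, ne_eq, ENNReal.coe_eq_zero]
        exact (Real.toNNReal_pos.mpr (hq0 x)).ne'
      have hlogcont : Continuous fun x => Real.log (pr x) :=
        hpcont.log fun x => (hp0 x).ne'
      have heq : (fun x => Real.log (pr x)) = fun _ => c :=
        (hlogcont.ae_eq_iff_eq volume continuous_const).mp hae'
      set v : Fin d → ℝ := fun _ => 1 with hv
      have hvne : v ≠ 0 := by
        intro h
        have := congrFun h ⟨0, hd⟩
        norm_num [hv] at this
      have h1 := congrFun heq θ₀
      have h2 := congrFun heq (θ₀ + v)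
      rw [hprx θ₀] at h1
      rw [hprx (θ₀ + v)] at h2
      simp only [sub_self, Matrix.mulVec_zero, dotProduct_zero, mul_zero, Real.exp_zero,
        mul_one] at h1
      rw [add_sub_cancel_left, Real.log_mul hcp.ne' (Real.exp_ne_zero _),
        Real.log_exp] at h2
      have hQv : 0 < v ⬝ᵥ (C₀⁻¹ *ᵥ v) := quad_pos hP hvne
      rw [h1] at h2
      nlinarith
    · rw [average_eq_integral, average_eq_integral] at hlt
      have h2 : ∫ x, Real.exp (Real.log (pr x)) ∂ν = ∫ x, pr x ∂ν :=
        integral_congr_ae (ae_of_all _ fun x => Real.exp_log (hp0 x))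
      rw [h2, hIconv pr, hIconv (fun x => Real.log (pr x))] at hlt
      have hS1 : (∫ x, q x * pr x) = S 1 := by
        rw [hSdef]; simp only [pow_one]
      rw [hS1] at hlt
      rw [hLdef]
      exact (Real.lt_log_iff_exp_lt (hSpos 1)).mpr hlt
  -- final assembly
  intro M hM
  obtain ⟨n, rfl⟩ : ∃ n : ℕ, M = n + 1 := ⟨M - 1, (Nat.succ_pred_eq_of_pos hM).symm⟩
  rw [hKL (n+1) hM, hKL (n+1+1) (by omega)]
  have e1 : (n + 1) - 1 = n := rfl
  have e2 : (n + 1 + 1) - 1 = n + 1 := rfl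
  rw [e1, e2]
  have hc1 : ((n + 1 : ℕ) : ℝ) - 1 = (n : ℝ) := by push_cast; ring
  have hc2 : ((n + 1 + 1 : ℕ) : ℝ) - 1 = (n : ℝ) + 1 := by push_cast; ring
  rw [hc1, hc2]
  have hlog : Real.log (S 1) + Real.log (S n) ≤ Real.log (S (n+1)) := by
    have := Real.log_le_log (mul_pos (hSpos 1) (hSpos n)) (hstep n)
    rwa [Real.log_mul (hSpos 1).ne' (hSpos n).ne'] at this
  have hSn : Real.log (∫ x, q x * pr x ^ n) = Real.log (S n) := rfl
  have hSn1 : Real.log (∫ x, q x * pr x ^ (n+1)) = Real.log (S (n+1)) := rfl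
  have hLL : (∫ x, q x * Real.log (pr x)) = L := rfl
  rw [hSn, hSn1]
  linarith [hlog, hLlt]
end
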